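/- arXiv:2402.16041 — 4 statements merged into one kernel-verified Lean document; each statement's English description precedes it below -/
import Mathlib

section
/- (Bounded-difference property of MPP̂_u.) Let MPP̂_u be computed from samples (x₁,…,xₙ), (y₁,…,yₙ), and let MPP̂_u' be computed from the samples obtained by replacing the single pair (x₁,y₁) by another pair (x₁',y₁') ∈ 𝒳 × 𝒳. Then |MPP̂_u − MPP̂_u'| ≤ 12ν/n. -/
open MeasureTheory ProbabilityTheory Filter Finset

/-- `Hstar k (x,y) (x',y') = k(x,x') - k(x,y') - k(y,x')`. -/
noncomputable def Hstar {𝒳 : Type*} (k : 𝒳 → 𝒳 → ℝ) (u v : 𝒳 × 𝒳) : ℝ :=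
  k u.1 v.1 - k u.1 v.2 - k u.2 v.1

/-- The U-statistic estimator `MPP̂_u = (1/(n(n-1))) ∑_{i≠j} H*ᵢⱼ`. -/
noncomputable def MPPhat {𝒳 : Type*} (k : 𝒳 → 𝒳 → ℝ) (n : ℕ) (u : Fin n → 𝒳 × 𝒳) : ℝ :=
  ((n : ℝ) * ((n : ℝ) - 1))⁻¹ *
    ∑ i : Fin n, ∑ j ∈ Finset.univ.erase i, Hstar k (u i) (u j)

/-!
Changing one sample pair only changes the terms `H*ᵢⱼ` in row and column `0` of the
off-diagonal array: at most `2(n-1)` terms, each by at most `6ν` since `|H*| ≤ 3ν`.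
After dividing by `n(n-1)` this is `12ν/n`.
-/

theorem abs_Hstar_le {𝒳 : Type*} {k : 𝒳 → 𝒳 → ℝ} {ν : ℝ} (hbound : ∀ x x', |k x x'| ≤ ν)
    (v w : 𝒳 × 𝒳) : |Hstar k v w| ≤ 3 * ν := by
  unfold Hstar
  calc |k v.1 w.1 - k v.1 w.2 - k v.2 w.1|
      ≤ |k v.1 w.1| + |k v.1 w.2| + |k v.2 w.1| :=
        (abs_sub _ _).trans (add_le_add_left (abs_sub _ _) _)
    _ ≤ 3 * ν := by linarith [hbound v.1 w.1, hbound v.1 w.2, hbound v.2 w.1]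

section CrossSupported

variable {ι : Type*} [Fintype ι] [DecidableEq ι]

theorem sum_offDiag_eq_of_eq_zero_off_cross (F : ι → ι → ℝ) (z : ι)
    (hF : ∀ i j, i ≠ z → j ≠ z → F i j = 0) :
    ∑ i, ∑ j ∈ univ.erase i, F i j = ∑ j ∈ univ.erase z, (F z j + F j z) := by
  rw [← add_sum_erase _ _ (mem_univ z), sum_add_distrib]
  congr 1
  refine sum_congr rfl fun i hi => ?_
  have hiz : i ≠ z := ne_of_mem_erase hi
  exact sum_eq_single_of_mem z (mem_erase.2 ⟨hiz.symm, mem_univ z⟩)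
    fun j _ hjz => hF i j hiz hjz

theorem abs_sum_offDiag_le_of_eq_zero_off_cross (F : ι → ι → ℝ) (z : ι) {c : ℝ}
    (hF : ∀ i j, i ≠ z → j ≠ z → F i j = 0) (hc : ∀ i j, |F i j| ≤ c) :
    |∑ i, ∑ j ∈ univ.erase i, F i j| ≤ 2 * (Fintype.card ι - 1) * c := by
  rw [sum_offDiag_eq_of_eq_zero_off_cross F z hF]
  calc |∑ j ∈ univ.erase z, (F z j + F j z)|
      ≤ ∑ j ∈ univ.erase z, |F z j + F j z| := abs_sum_le_sum_abs _ _
    _ ≤ ∑ j ∈ univ.erase z, 2 * c :=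
        sum_le_sum fun j _ => (abs_add_le _ _).trans (by linarith [hc z j, hc j z])
    _ = 2 * (Fintype.card ι - 1) * c := by
        rw [sum_const, card_erase_of_mem (mem_univ z), card_univ, nsmul_eq_mul,
          Nat.cast_sub (Fintype.card_pos_iff.2 ⟨z⟩)]
        ring

end CrossSupported

theorem mpphat_bounded_difference_general {𝒳 : Type*} (k : 𝒳 → 𝒳 → ℝ) (ν : ℝ)
    (hbound : ∀ x x', |k x x'| ≤ ν)
    (n : ℕ) (hn : 2 ≤ n)
    (u u' : Fin n → 𝒳 × 𝒳)
    (hu : ∀ i : Fin n, (i : ℕ) ≠ 0 → u' i = u i) :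
    |MPPhat k n u - MPPhat k n u'| ≤ 12 * ν / n := by
  have hn1 : (1 : ℝ) < n := by exact_mod_cast hn
  set z : Fin n := ⟨0, by omega⟩
  have hz : ∀ i, i ≠ z → u' i = u i := fun i hi => hu i fun h => hi (Fin.ext h)
  have hsum := abs_sum_offDiag_le_of_eq_zero_off_cross (c := 6 * ν)
    (fun i j => Hstar k (u i) (u j) - Hstar k (u' i) (u' j)) z
    (fun i j hi hj => by simp only [hz i hi, hz j hj, sub_self])
    (fun i j => (abs_sub _ _).trans <| by
      linarith [abs_Hstar_le hbound (u i) (u j), abs_Hstar_le hbound (u' i) (u' j)])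
  rw [Fintype.card_fin] at hsum
  have hn_sub_one : (n : ℝ) - 1 ≠ 0 := by linarith
  have hpos : (0 : ℝ) < n * (n - 1) := by nlinarith
  simp only [MPPhat, ← mul_sub, ← sum_sub_distrib, abs_mul, abs_inv, abs_of_pos hpos]
  calc _ ≤ (n * (n - 1) : ℝ)⁻¹ * (2 * (n - 1) * (6 * ν)) := by gcongr
    _ = 12 * ν / n := by field_simp; ring

/-- Bounded-difference property of `MPP̂_u`: replacing the single sample pair
`(x₁, y₁)` (index `0`) by another pair changes `MPP̂_u` by at most `12ν/n`. -/
theorem mpphat_bounded_difference {𝒳 : Type*} (k : 𝒳 → 𝒳 → ℝ) (ν : ℝ)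
    (hsymm : ∀ x x', k x x' = k x' x)
    (hbound : ∀ x x', |k x x'| ≤ ν)
    (n : ℕ) (hn : 2 ≤ n)
    (u u' : Fin n → 𝒳 × 𝒳)
    (hu : ∀ i : Fin n, (i : ℕ) ≠ 0 → u' i = u i) :
    |MPPhat k n u - MPPhat k n u'| ≤ 12 * ν / n :=
  mpphat_bounded_difference_general k ν hbound n hn u u' hu
end

section
/- (Lipschitz continuity of σ̂² in the kernel parameter.) For any fixed samples x₁,…,xₙ, y₁,…,yₙ ∈ 𝒳 and any ω, ω' ∈ Ω, |σ̂²(ω) − σ̂²(ω')| ≤ 144 ν L_k ‖ω − ω'‖, where σ̂²(ω) is computed with kernel k_ω. -/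
open MeasureTheory ProbabilityTheory Filter Finset

/-- The variance estimator
`σ̂² = (4/n³) ∑ᵢ (∑ⱼ H*ᵢⱼ)² − (4/n⁴) (∑ᵢ∑ⱼ H*ᵢⱼ)²` (sums include `i = j`). -/
noncomputable def sigmaHat {𝒳 : Type*} (k : 𝒳 → 𝒳 → ℝ) (n : ℕ) (u : Fin n → 𝒳 × 𝒳) : ℝ :=
  (4 / (n : ℝ) ^ 3) * ∑ i : Fin n, (∑ j : Fin n, Hstar k (u i) (u j)) ^ 2
    - (4 / (n : ℝ) ^ 4) * (∑ i : Fin n, ∑ j : Fin n, Hstar k (u i) (u j)) ^ 2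

/-- Lipschitz continuity of `σ̂²` in the kernel parameter:
`|σ̂²(ω) − σ̂²(ω')| ≤ 144 ν L_k ‖ω − ω'‖`. -/
theorem sigmaHat_lipschitz_in_kernel {𝒳 W : Type*} [NormedAddCommGroup W] [NormedSpace ℝ W]
    (S : Set W) (K : W → 𝒳 → 𝒳 → ℝ) (ν Lk : ℝ)
    (hsymm : ∀ w ∈ S, ∀ x x', K w x x' = K w x' x)
    (hbound : ∀ w ∈ S, ∀ x x', |K w x x'| ≤ ν)
    (hlip : ∀ w ∈ S, ∀ w' ∈ S, ∀ x x', |K w x x' - K w' x x'| ≤ Lk * ‖w - w'‖)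
    (n : ℕ) (hn : 2 ≤ n) (u : Fin n → 𝒳 × 𝒳)
    (w w' : W) (hw : w ∈ S) (hw' : w' ∈ S) :
    |sigmaHat (K w) n u - sigmaHat (K w') n u| ≤ 144 * ν * Lk * ‖w - w'‖ := by
  rcases eq_or_ne w w' with rfl | hne
  · simp
  have hd : 0 < ‖w - w'‖ := by rwa [norm_pos_iff, sub_ne_zero]
  have hnpos : (0:ℝ) < (n:ℝ) := by
    have : (0:ℕ) < n := by omega
    exact_mod_cast this
  set x0 := (u ⟨0, by omega⟩).1 with hx0
  have hν : 0 ≤ ν := le_trans (abs_nonneg _) (hbound w hw x0 x0)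
  have hLk : 0 ≤ Lk := by
    have h := hlip w hw w' hw' x0 x0
    nlinarith [abs_nonneg (K w x0 x0 - K w' x0 x0)]
  set f : Fin n → Fin n → ℝ := fun i j => Hstar (K w) (u i) (u j) with hf_def
  set g : Fin n → Fin n → ℝ := fun i j => Hstar (K w') (u i) (u j) with hg_def
  have hf : ∀ i j, |f i j| ≤ 3*ν := by
    intro i j
    have h1 := abs_le.mp (hbound w hw (u i).1 (u j).1)
    have h2 := abs_le.mp (hbound w hw (u i).1 (u j).2)
    have h3 := abs_le.mp (hbound w hw (u i).2 (u j).1)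
    rw [abs_le]
    constructor <;> simp only [hf_def, Hstar] <;> linarith
  have hg : ∀ i j, |g i j| ≤ 3*ν := by
    intro i j
    have h1 := abs_le.mp (hbound w' hw' (u i).1 (u j).1)
    have h2 := abs_le.mp (hbound w' hw' (u i).1 (u j).2)
    have h3 := abs_le.mp (hbound w' hw' (u i).2 (u j).1)
    rw [abs_le]
    constructor <;> simp only [hg_def, Hstar] <;> linarith
  have hfg : ∀ i j, |f i j - g i j| ≤ 3 * (Lk * ‖w - w'‖) := by
    intro i j
    have h1 := abs_le.mp (hlip w hw w' hw' (u i).1 (u j).1)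
    have h2 := abs_le.mp (hlip w hw w' hw' (u i).1 (u j).2)
    have h3 := abs_le.mp (hlip w hw w' hw' (u i).2 (u j).1)
    rw [abs_le]
    constructor <;> simp only [hf_def, hg_def, Hstar] <;> linarith
  set Sf : Fin n → ℝ := fun i => ∑ j, f i j with hSf
  set Sg : Fin n → ℝ := fun i => ∑ j, g i j with hSg
  have hSfb : ∀ i, |Sf i| ≤ n * (3*ν) := by
    intro i
    calc |Sf i| ≤ ∑ j, |f i j| := Finset.abs_sum_le_sum_abs _ _
    _ ≤ ∑ _j : Fin n, 3*ν := Finset.sum_le_sum fun j _ => hf i j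
    _ = n * (3*ν) := by simp [Finset.sum_const, nsmul_eq_mul]
  have hSgb : ∀ i, |Sg i| ≤ n * (3*ν) := by
    intro i
    calc |Sg i| ≤ ∑ j, |g i j| := Finset.abs_sum_le_sum_abs _ _
    _ ≤ ∑ _j : Fin n, 3*ν := Finset.sum_le_sum fun j _ => hg i j
    _ = n * (3*ν) := by simp [Finset.sum_const, nsmul_eq_mul]
  have hSd : ∀ i, |Sf i - Sg i| ≤ n * (3 * (Lk * ‖w - w'‖)) := by
    intro i
    rw [show Sf i - Sg i = ∑ j, (f i j - g i j) by rw [hSf, hSg]; simp [Finset.sum_sub_distrib]]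
    calc |∑ j, (f i j - g i j)| ≤ ∑ j, |f i j - g i j| := Finset.abs_sum_le_sum_abs _ _
    _ ≤ ∑ _j : Fin n, 3 * (Lk * ‖w - w'‖) := Finset.sum_le_sum fun j _ => hfg i j
    _ = n * (3 * (Lk * ‖w - w'‖)) := by simp [Finset.sum_const, nsmul_eq_mul]
  -- squared differences
  have hsq : ∀ (a b Ma D : ℝ), |a| ≤ Ma → |b| ≤ Ma → |a - b| ≤ D →
      |a^2 - b^2| ≤ 2 * Ma * D := by
    intro a b Ma D ha hb hD
    have : a^2 - b^2 = (a + b) * (a - b) := by ring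
    rw [this, abs_mul]
    have h1 : |a + b| ≤ 2 * Ma := by
      calc |a + b| ≤ |a| + |b| := abs_add_le _ _
      _ ≤ 2 * Ma := by linarith
    exact mul_le_mul h1 hD (abs_nonneg _) (by nlinarith [abs_nonneg a])
  have hMa : (0:ℝ) ≤ n * (3*ν) := by nlinarith
  have hA : |∑ i, (Sf i)^2 - ∑ i, (Sg i)^2| ≤ n * (2 * (n * (3*ν)) * (n * (3 * (Lk * ‖w - w'‖)))) := by
    rw [show (∑ i, (Sf i)^2) - ∑ i, (Sg i)^2 = ∑ i, ((Sf i)^2 - (Sg i)^2) by simp [Finset.sum_sub_distrib]]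
    calc |∑ i, ((Sf i)^2 - (Sg i)^2)| ≤ ∑ i, |(Sf i)^2 - (Sg i)^2| := Finset.abs_sum_le_sum_abs _ _
    _ ≤ ∑ _i : Fin n, 2 * (n * (3*ν)) * (n * (3 * (Lk * ‖w - w'‖))) :=
        Finset.sum_le_sum fun i _ => hsq _ _ _ _ (hSfb i) (hSgb i) (hSd i)
    _ = n * (2 * (n * (3*ν)) * (n * (3 * (Lk * ‖w - w'‖)))) := by simp [Finset.sum_const, nsmul_eq_mul]
  set Tf : ℝ := ∑ i, Sf i with hTf
  set Tg : ℝ := ∑ i, Sg i with hTg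
  have hTfb : |Tf| ≤ n * (n * (3*ν)) := by
    calc |Tf| ≤ ∑ i, |Sf i| := Finset.abs_sum_le_sum_abs _ _
    _ ≤ ∑ _i : Fin n, n * (3*ν) := Finset.sum_le_sum fun i _ => hSfb i
    _ = n * (n * (3*ν)) := by simp [Finset.sum_const, nsmul_eq_mul]
  have hTgb : |Tg| ≤ n * (n * (3*ν)) := by
    calc |Tg| ≤ ∑ i, |Sg i| := Finset.abs_sum_le_sum_abs _ _
    _ ≤ ∑ _i : Fin n, n * (3*ν) := Finset.sum_le_sum fun i _ => hSgb i
    _ = n * (n * (3*ν)) := by simp [Finset.sum_const, nsmul_eq_mul]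
  have hTd : |Tf - Tg| ≤ n * (n * (3 * (Lk * ‖w - w'‖))) := by
    rw [show Tf - Tg = ∑ i, (Sf i - Sg i) by rw [hTf, hTg]; simp [Finset.sum_sub_distrib]]
    calc |∑ i, (Sf i - Sg i)| ≤ ∑ i, |Sf i - Sg i| := Finset.abs_sum_le_sum_abs _ _
    _ ≤ ∑ _i : Fin n, n * (3 * (Lk * ‖w - w'‖)) := Finset.sum_le_sum fun i _ => hSd i
    _ = n * (n * (3 * (Lk * ‖w - w'‖))) := by simp [Finset.sum_const, nsmul_eq_mul]
  have hB : |Tf^2 - Tg^2| ≤ 2 * (n * (n * (3*ν))) * (n * (n * (3 * (Lk * ‖w - w'‖)))) :=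
    hsq _ _ _ _ hTfb hTgb hTd
  -- assemble
  have heq : sigmaHat (K w) n u - sigmaHat (K w') n u =
      (4 / (n:ℝ)^3) * (∑ i, (Sf i)^2 - ∑ i, (Sg i)^2) - (4 / (n:ℝ)^4) * (Tf^2 - Tg^2) := by
    simp only [sigmaHat, hSf, hSg, hTf, hTg, hf_def, hg_def]
    ring
  rw [heq]
  have hc3 : (0:ℝ) ≤ 4 / (n:ℝ)^3 := by positivity
  have hc4 : (0:ℝ) ≤ 4 / (n:ℝ)^4 := by positivity
  calc |(4 / (n:ℝ)^3) * (∑ i, (Sf i)^2 - ∑ i, (Sg i)^2) - (4 / (n:ℝ)^4) * (Tf^2 - Tg^2)|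
      ≤ |(4 / (n:ℝ)^3) * (∑ i, (Sf i)^2 - ∑ i, (Sg i)^2)| + |(4 / (n:ℝ)^4) * (Tf^2 - Tg^2)| :=
        abs_sub _ _
    _ = (4 / (n:ℝ)^3) * |∑ i, (Sf i)^2 - ∑ i, (Sg i)^2| + (4 / (n:ℝ)^4) * |Tf^2 - Tg^2| := by
        rw [abs_mul, abs_mul, abs_of_nonneg hc3, abs_of_nonneg hc4]
    _ ≤ (4 / (n:ℝ)^3) * (n * (2 * (n * (3*ν)) * (n * (3 * (Lk * ‖w - w'‖)))))
        + (4 / (n:ℝ)^4) * (2 * (n * (n * (3*ν))) * (n * (n * (3 * (Lk * ‖w - w'‖))))) := by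
        gcongr
    _ = 144 * ν * Lk * ‖w - w'‖ := by
        field_simp
        ring
end

section
/- (Lemma A.3, Lipschitz continuity of Ψ.) Define Ψ(ω) := σ̂²(ω) − σ²_{H₁*}(ω). For any fixed samples x₁,…,xₙ, y₁,…,yₙ ∈ 𝒳 and any ω, ω' ∈ Ω, |Ψ(ω) − Ψ(ω')| ≤ 288 ν L_k ‖ω − ω'‖. -/
open MeasureTheory ProbabilityTheory Filter Finset

/-- `σ²_{H₁*} = 4 (E[H*₁₂ H*₁₃] - (E[H*₁₂])²)`, expectations over i.i.d. pairs
with common law `m`, written as iterated integrals. -/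
noncomputable def sigmaSqPop {𝒳 : Type*} [MeasurableSpace 𝒳]
    (m : Measure (𝒳 × 𝒳)) (k : 𝒳 → 𝒳 → ℝ) : ℝ :=
  4 * ((∫ u, (∫ v, (∫ w, Hstar k u v * Hstar k u w ∂m) ∂m) ∂m)
    - (∫ u, (∫ v, Hstar k u v ∂m) ∂m) ^ 2)

/- ### Auxiliary lemmas -/

lemma abs_sq_sub_sq' (a b : ℝ) : |a ^ 2 - b ^ 2| ≤ (|a| + |b|) * |a - b| := by
  have h : a ^ 2 - b ^ 2 = (a + b) * (a - b) := by ring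
  rw [h, abs_mul]
  gcongr
  exact abs_add_le a b

section Integral

variable {α : Type*} [MeasurableSpace α] {μ : Measure α} [IsProbabilityMeasure μ]

lemma abs_integral_le_of_bound {f : α → ℝ} (hf : Integrable f μ) {C : ℝ}
    (hC : ∀ a, |f a| ≤ C) : |∫ a, f a ∂μ| ≤ C := by
  calc |∫ a, f a ∂μ| ≤ ∫ a, |f a| ∂μ := by
        simpa [Real.norm_eq_abs] using norm_integral_le_integral_norm (μ := μ) f
    _ ≤ ∫ _a, C ∂μ := integral_mono hf.abs (integrable_const C) hC
    _ = C := by simp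

lemma abs_integral_sub_le {f g : α → ℝ} (hf : Integrable f μ) (hg : Integrable g μ)
    {C : ℝ} (hC : ∀ a, |f a - g a| ≤ C) :
    |∫ a, f a ∂μ - ∫ a, g a ∂μ| ≤ C := by
  rw [← integral_sub hf hg]
  exact abs_integral_le_of_bound (hf.sub hg) hC

end Integral

/-- Lipschitz-type bound for the variance estimator. -/
lemma sigmaHat_diff {𝒳 : Type*} (k k' : 𝒳 → 𝒳 → ℝ) (n : ℕ) (hn : 2 ≤ n)
    (u : Fin n → 𝒳 × 𝒳) {a d : ℝ} (ha : 0 ≤ a) (hd : 0 ≤ d)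
    (hb : ∀ x y, |Hstar k x y| ≤ a) (hb' : ∀ x y, |Hstar k' x y| ≤ a)
    (hdiff : ∀ x y, |Hstar k x y - Hstar k' x y| ≤ d) :
    |sigmaHat k n u - sigmaHat k' n u| ≤ 16 * a * d := by
  have hn0 : (0:ℝ) < (n:ℝ) := by
    have : (2:ℝ) ≤ (n:ℝ) := by exact_mod_cast hn
    linarith
  set S : Fin n → ℝ := fun i => ∑ j, Hstar k (u i) (u j) with hS
  set S' : Fin n → ℝ := fun i => ∑ j, Hstar k' (u i) (u j) with hS'
  have hSb : ∀ i, |S i| ≤ (n:ℝ) * a := by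
    intro i
    calc |S i| ≤ ∑ j, |Hstar k (u i) (u j)| := Finset.abs_sum_le_sum_abs _ _
      _ ≤ ∑ _j : Fin n, a := Finset.sum_le_sum fun j _ => hb _ _
      _ = (n:ℝ) * a := by simp [mul_comm]
  have hS'b : ∀ i, |S' i| ≤ (n:ℝ) * a := by
    intro i
    calc |S' i| ≤ ∑ j, |Hstar k' (u i) (u j)| := Finset.abs_sum_le_sum_abs _ _
      _ ≤ ∑ _j : Fin n, a := Finset.sum_le_sum fun j _ => hb' _ _
      _ = (n:ℝ) * a := by simp [mul_comm]
  have hSd : ∀ i, |S i - S' i| ≤ (n:ℝ) * d := by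
    intro i
    rw [hS, hS']
    simp only [← Finset.sum_sub_distrib]
    calc |∑ j, (Hstar k (u i) (u j) - Hstar k' (u i) (u j))|
        ≤ ∑ j, |Hstar k (u i) (u j) - Hstar k' (u i) (u j)| :=
          Finset.abs_sum_le_sum_abs _ _
      _ ≤ ∑ _j : Fin n, d := Finset.sum_le_sum fun j _ => hdiff _ _
      _ = (n:ℝ) * d := by simp [mul_comm]
  -- per-term square difference bound
  have hsq : ∀ i, |(S i) ^ 2 - (S' i) ^ 2| ≤ ((n:ℝ) * a + (n:ℝ) * a) * ((n:ℝ) * d) := by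
    intro i
    refine (abs_sq_sub_sq' (S i) (S' i)).trans ?_
    have h1 : |S i| + |S' i| ≤ (n:ℝ) * a + (n:ℝ) * a := add_le_add (hSb i) (hS'b i)
    exact mul_le_mul h1 (hSd i) (abs_nonneg _) (by positivity)
  have hsum1 : |∑ i, (S i) ^ 2 - ∑ i, (S' i) ^ 2| ≤
      (n:ℝ) * (((n:ℝ) * a + (n:ℝ) * a) * ((n:ℝ) * d)) := by
    rw [← Finset.sum_sub_distrib]
    calc |∑ i, ((S i) ^ 2 - (S' i) ^ 2)| ≤ ∑ i, |(S i) ^ 2 - (S' i) ^ 2| :=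
          Finset.abs_sum_le_sum_abs _ _
      _ ≤ ∑ _i : Fin n, ((n:ℝ) * a + (n:ℝ) * a) * ((n:ℝ) * d) :=
          Finset.sum_le_sum fun i _ => hsq i
      _ = (n:ℝ) * (((n:ℝ) * a + (n:ℝ) * a) * ((n:ℝ) * d)) := by simp [mul_comm]
  -- the total sums
  set T : ℝ := ∑ i, S i with hT
  set T' : ℝ := ∑ i, S' i with hT'
  have hTb : |T| ≤ (n:ℝ) * ((n:ℝ) * a) := by
    calc |T| ≤ ∑ i, |S i| := Finset.abs_sum_le_sum_abs _ _
      _ ≤ ∑ _i : Fin n, (n:ℝ) * a := Finset.sum_le_sum fun i _ => hSb i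
      _ = (n:ℝ) * ((n:ℝ) * a) := by simp [mul_comm]
  have hT'b : |T'| ≤ (n:ℝ) * ((n:ℝ) * a) := by
    calc |T'| ≤ ∑ i, |S' i| := Finset.abs_sum_le_sum_abs _ _
      _ ≤ ∑ _i : Fin n, (n:ℝ) * a := Finset.sum_le_sum fun i _ => hS'b i
      _ = (n:ℝ) * ((n:ℝ) * a) := by simp [mul_comm]
  have hTd : |T - T'| ≤ (n:ℝ) * ((n:ℝ) * d) := by
    rw [hT, hT', ← Finset.sum_sub_distrib]
    calc |∑ i, (S i - S' i)| ≤ ∑ i, |S i - S' i| := Finset.abs_sum_le_sum_abs _ _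
      _ ≤ ∑ _i : Fin n, (n:ℝ) * d := Finset.sum_le_sum fun i _ => hSd i
      _ = (n:ℝ) * ((n:ℝ) * d) := by simp [mul_comm]
  have hTsq : |T ^ 2 - T' ^ 2| ≤
      ((n:ℝ) * ((n:ℝ) * a) + (n:ℝ) * ((n:ℝ) * a)) * ((n:ℝ) * ((n:ℝ) * d)) := by
    refine (abs_sq_sub_sq' T T').trans ?_
    exact mul_le_mul (add_le_add hTb hT'b) hTd (abs_nonneg _) (by positivity)
  have key : sigmaHat k n u - sigmaHat k' n u =
      (4 / (n:ℝ) ^ 3) * (∑ i, (S i) ^ 2 - ∑ i, (S' i) ^ 2)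
        - (4 / (n:ℝ) ^ 4) * (T ^ 2 - T' ^ 2) := by
    simp only [sigmaHat, hS, hS', hT, hT']
    ring
  rw [key]
  have h1 : |(4 / (n:ℝ) ^ 3) * (∑ i, (S i) ^ 2 - ∑ i, (S' i) ^ 2)| ≤ 8 * a * d := by
    rw [abs_mul, abs_of_nonneg (by positivity : (0:ℝ) ≤ 4 / (n:ℝ) ^ 3)]
    calc (4 / (n:ℝ) ^ 3) * |∑ i, (S i) ^ 2 - ∑ i, (S' i) ^ 2|
        ≤ (4 / (n:ℝ) ^ 3) * ((n:ℝ) * (((n:ℝ) * a + (n:ℝ) * a) * ((n:ℝ) * d))) := by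
          exact mul_le_mul_of_nonneg_left hsum1 (by positivity)
      _ = 8 * a * d := by field_simp; ring
  have h2 : |(4 / (n:ℝ) ^ 4) * (T ^ 2 - T' ^ 2)| ≤ 8 * a * d := by
    rw [abs_mul, abs_of_nonneg (by positivity : (0:ℝ) ≤ 4 / (n:ℝ) ^ 4)]
    calc (4 / (n:ℝ) ^ 4) * |T ^ 2 - T' ^ 2|
        ≤ (4 / (n:ℝ) ^ 4) *
            (((n:ℝ) * ((n:ℝ) * a) + (n:ℝ) * ((n:ℝ) * a)) * ((n:ℝ) * ((n:ℝ) * d))) := by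
          exact mul_le_mul_of_nonneg_left hTsq (by positivity)
      _ = 8 * a * d := by field_simp; ring
  calc |(4 / (n:ℝ) ^ 3) * (∑ i, (S i) ^ 2 - ∑ i, (S' i) ^ 2)
        - (4 / (n:ℝ) ^ 4) * (T ^ 2 - T' ^ 2)|
      ≤ |(4 / (n:ℝ) ^ 3) * (∑ i, (S i) ^ 2 - ∑ i, (S' i) ^ 2)|
        + |(4 / (n:ℝ) ^ 4) * (T ^ 2 - T' ^ 2)| := abs_sub _ _
    _ ≤ 16 * a * d := by linarith

/-- Lipschitz-type bound for the population variance. -/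
lemma sigmaSqPop_diff {𝒳 : Type*} [MeasurableSpace 𝒳] (m : Measure (𝒳 × 𝒳))
    [IsProbabilityMeasure m] (k k' : 𝒳 → 𝒳 → ℝ)
    (hk : Measurable (Function.uncurry k)) (hk' : Measurable (Function.uncurry k'))
    {a d : ℝ} (ha : 0 ≤ a) (hd : 0 ≤ d)
    (hb : ∀ x y, |Hstar k x y| ≤ a) (hb' : ∀ x y, |Hstar k' x y| ≤ a)
    (hdiff : ∀ x y, |Hstar k x y - Hstar k' x y| ≤ d) :
    |sigmaSqPop m k - sigmaSqPop m k'| ≤ 16 * a * d := by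
  -- joint measurability of Hstar
  have Hm : ∀ (κ : 𝒳 → 𝒳 → ℝ), Measurable (Function.uncurry κ) →
      Measurable (fun p : (𝒳 × 𝒳) × (𝒳 × 𝒳) => Hstar κ p.1 p.2) := by
    intro κ hκ
    exact ((hκ.comp ((measurable_fst.fst).prodMk (measurable_snd.fst))).sub
      (hκ.comp ((measurable_fst.fst).prodMk (measurable_snd.snd)))).sub
      (hκ.comp ((measurable_fst.snd).prodMk (measurable_snd.fst)))
  have Hmk := Hm k hk
  have Hmk' := Hm k' hk'
  -- for each u, the slice is integrable
  have hIntSlice : ∀ (κ : 𝒳 → 𝒳 → ℝ),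
      Measurable (fun p : (𝒳 × 𝒳) × (𝒳 × 𝒳) => Hstar κ p.1 p.2) →
      (∀ x y, |Hstar κ x y| ≤ a) →
      ∀ u, Integrable (fun v => Hstar κ u v) m := by
    intro κ hκ hbd u
    refine Integrable.mono' (integrable_const a)
      ((hκ.comp measurable_prodMk_left).aestronglyMeasurable) ?_
    filter_upwards with v
    simpa [Real.norm_eq_abs] using hbd u v
  have hIk := hIntSlice k Hmk hb
  have hIk' := hIntSlice k' Hmk' hb'
  set G : 𝒳 × 𝒳 → ℝ := fun x => ∫ v, Hstar k x v ∂m with hGdef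
  set G' : 𝒳 × 𝒳 → ℝ := fun x => ∫ v, Hstar k' x v ∂m with hG'def
  have hGsm : StronglyMeasurable G := Hmk.stronglyMeasurable.integral_prod_right'
  have hG'sm : StronglyMeasurable G' := Hmk'.stronglyMeasurable.integral_prod_right'
  have hGb : ∀ x, |G x| ≤ a := fun x => abs_integral_le_of_bound (hIk x) (fun v => hb x v)
  have hG'b : ∀ x, |G' x| ≤ a := fun x => abs_integral_le_of_bound (hIk' x) (fun v => hb' x v)
  have hGd : ∀ x, |G x - G' x| ≤ d := fun x =>
    abs_integral_sub_le (hIk x) (hIk' x) (fun v => hdiff x v)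
  have hIG : Integrable G m := by
    refine Integrable.mono' (integrable_const a) hGsm.aestronglyMeasurable ?_
    filter_upwards with x; simpa [Real.norm_eq_abs] using hGb x
  have hIG' : Integrable G' m := by
    refine Integrable.mono' (integrable_const a) hG'sm.aestronglyMeasurable ?_
    filter_upwards with x; simpa [Real.norm_eq_abs] using hG'b x
  have hIG2 : Integrable (fun x => (G x) ^ 2) m := by
    simp_rw [pow_two]
    refine Integrable.mono' (integrable_const (a * a))
      (hGsm.mul hGsm).aestronglyMeasurable ?_
    filter_upwards with x
    rw [Real.norm_eq_abs, abs_mul]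
    exact mul_le_mul (hGb x) (hGb x) (abs_nonneg _) ha
  have hIG'2 : Integrable (fun x => (G' x) ^ 2) m := by
    simp_rw [pow_two]
    refine Integrable.mono' (integrable_const (a * a))
      (hG'sm.mul hG'sm).aestronglyMeasurable ?_
    filter_upwards with x
    rw [Real.norm_eq_abs, abs_mul]
    exact mul_le_mul (hG'b x) (hG'b x) (abs_nonneg _) ha
  -- rewrite sigmaSqPop in terms of G
  have hrw : ∀ (κ : 𝒳 → 𝒳 → ℝ) (Gk : 𝒳 × 𝒳 → ℝ),
      (Gk = fun x => ∫ v, Hstar κ x v ∂m) →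
      sigmaSqPop m κ = 4 * ((∫ x, (Gk x) ^ 2 ∂m) - (∫ x, Gk x ∂m) ^ 2) := by
    intro κ Gk hGk
    have h1 : ∀ x : 𝒳 × 𝒳,
        (∫ v, (∫ w, Hstar κ x v * Hstar κ x w ∂m) ∂m) = (Gk x) ^ 2 := by
      intro x
      have h2 : ∀ v : 𝒳 × 𝒳, (∫ w, Hstar κ x v * Hstar κ x w ∂m)
          = Hstar κ x v * Gk x := by
        intro v
        rw [hGk]
        exact integral_const_mul _ _
      simp_rw [h2]
      rw [integral_mul_const, hGk, sq]
    simp only [sigmaSqPop]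
    simp_rw [h1]
    rw [hGk]
  rw [hrw k G hGdef, hrw k' G' hG'def]
  -- now bound
  have hA : |(∫ x, (G x) ^ 2 ∂m) - (∫ x, (G' x) ^ 2 ∂m)| ≤ 2 * a * d := by
    refine abs_integral_sub_le hIG2 hIG'2 ?_
    intro x
    refine (abs_sq_sub_sq' (G x) (G' x)).trans ?_
    have := mul_le_mul (add_le_add (hGb x) (hG'b x)) (hGd x) (abs_nonneg _) (by positivity)
    linarith
  have hBG : |∫ x, G x ∂m| ≤ a := abs_integral_le_of_bound hIG hGb
  have hBG' : |∫ x, G' x ∂m| ≤ a := abs_integral_le_of_bound hIG' hG'b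
  have hBd : |(∫ x, G x ∂m) - (∫ x, G' x ∂m)| ≤ d := abs_integral_sub_le hIG hIG' hGd
  have hB : |(∫ x, G x ∂m) ^ 2 - (∫ x, G' x ∂m) ^ 2| ≤ 2 * a * d := by
    refine (abs_sq_sub_sq' _ _).trans ?_
    have := mul_le_mul (add_le_add hBG hBG') hBd (abs_nonneg _) (by positivity)
    linarith
  calc |4 * ((∫ x, (G x) ^ 2 ∂m) - (∫ x, G x ∂m) ^ 2)
        - 4 * ((∫ x, (G' x) ^ 2 ∂m) - (∫ x, G' x ∂m) ^ 2)|
      = |4 * (((∫ x, (G x) ^ 2 ∂m) - (∫ x, (G' x) ^ 2 ∂m))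
          - ((∫ x, G x ∂m) ^ 2 - (∫ x, G' x ∂m) ^ 2))| := by ring_nf
    _ = 4 * |((∫ x, (G x) ^ 2 ∂m) - (∫ x, (G' x) ^ 2 ∂m))
          - ((∫ x, G x ∂m) ^ 2 - (∫ x, G' x ∂m) ^ 2)| := by
        rw [abs_mul]; norm_num
    _ ≤ 4 * (|(∫ x, (G x) ^ 2 ∂m) - (∫ x, (G' x) ^ 2 ∂m)|
          + |(∫ x, G x ∂m) ^ 2 - (∫ x, G' x ∂m) ^ 2|) := by
        have := abs_sub ((∫ x, (G x) ^ 2 ∂m) - (∫ x, (G' x) ^ 2 ∂m))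
          ((∫ x, G x ∂m) ^ 2 - (∫ x, G' x ∂m) ^ 2)
        linarith
    _ ≤ 16 * a * d := by linarith

/-- Lemma A.3 (Lipschitz continuity of `Ψ(ω) := σ̂²(ω) − σ²_{H₁*}(ω)`):
`|Ψ(ω) − Ψ(ω')| ≤ 288 ν L_k ‖ω − ω'‖`. -/
theorem psi_lipschitz_in_kernel {𝒳 W : Type*} [MeasurableSpace 𝒳]
    [NormedAddCommGroup W] [NormedSpace ℝ W]
    (P Q : Measure 𝒳) [IsProbabilityMeasure P] [IsProbabilityMeasure Q]
    (m : Measure (𝒳 × 𝒳)) [IsProbabilityMeasure m]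
    (hmP : m.map Prod.fst = P) (hmQ : m.map Prod.snd = Q)
    (S : Set W) (K : W → 𝒳 → 𝒳 → ℝ) (ν Lk : ℝ)
    (hmeas : ∀ w ∈ S, Measurable (Function.uncurry (K w)))
    (hsymm : ∀ w ∈ S, ∀ x x', K w x x' = K w x' x)
    (hbound : ∀ w ∈ S, ∀ x x', |K w x x'| ≤ ν)
    (hlip : ∀ w ∈ S, ∀ w' ∈ S, ∀ x x', |K w x x' - K w' x x'| ≤ Lk * ‖w - w'‖)
    (n : ℕ) (hn : 2 ≤ n) (u : Fin n → 𝒳 × 𝒳)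
    (w w' : W) (hw : w ∈ S) (hw' : w' ∈ S) :
    |(sigmaHat (K w) n u - sigmaSqPop m (K w)) -
        (sigmaHat (K w') n u - sigmaSqPop m (K w'))| ≤
      288 * ν * Lk * ‖w - w'‖ := by
  -- 𝒳 is nonempty since m is a probability measure
  have hX : Nonempty 𝒳 := by
    by_contra h
    rw [not_nonempty_iff] at h
    have h1 : (Set.univ : Set (𝒳 × 𝒳)) = ∅ := Set.univ_eq_empty_iff.mpr inferInstance
    have h2 : m Set.univ = 1 := measure_univ
    rw [h1] at h2
    simp at h2
  obtain ⟨x₀⟩ := hX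
  have hν : 0 ≤ ν := le_trans (abs_nonneg _) (hbound w hw x₀ x₀)
  set c : ℝ := Lk * ‖w - w'‖ with hc_def
  have hc : 0 ≤ c := le_trans (abs_nonneg _) (hlip w hw w' hw' x₀ x₀)
  -- pointwise bounds on Hstar
  have hH : ∀ (ω : W), ω ∈ S → ∀ (x y : 𝒳 × 𝒳), |Hstar (K ω) x y| ≤ 3 * ν := by
    intro ω hω x y
    have h1 := hbound ω hω x.1 y.1
    have h2 := hbound ω hω x.1 y.2
    have h3 := hbound ω hω x.2 y.1
    rw [abs_le] at h1 h2 h3 ⊢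
    unfold Hstar
    constructor <;> [linarith [h1.1, h2.2, h3.2]; linarith [h1.2, h2.1, h3.1]]
  have hHd : ∀ (x y : 𝒳 × 𝒳), |Hstar (K w) x y - Hstar (K w') x y| ≤ 3 * c := by
    intro x y
    have h1 := hlip w hw w' hw' x.1 y.1
    have h2 := hlip w hw w' hw' x.1 y.2
    have h3 := hlip w hw w' hw' x.2 y.1
    rw [← hc_def] at h1 h2 h3
    rw [abs_le] at h1 h2 h3 ⊢
    unfold Hstar
    constructor <;> [linarith [h1.1, h2.2, h3.2]; linarith [h1.2, h2.1, h3.1]]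
  have hhat : |sigmaHat (K w) n u - sigmaHat (K w') n u| ≤ 16 * (3 * ν) * (3 * c) :=
    sigmaHat_diff (K w) (K w') n hn u (by positivity) (by positivity)
      (hH w hw) (hH w' hw') hHd
  have hpop : |sigmaSqPop m (K w) - sigmaSqPop m (K w')| ≤ 16 * (3 * ν) * (3 * c) :=
    sigmaSqPop_diff m (K w) (K w') (hmeas w hw) (hmeas w' hw')
      (by positivity) (by positivity) (hH w hw) (hH w' hw') hHd
  have hsplit : |(sigmaHat (K w) n u - sigmaSqPop m (K w)) -
      (sigmaHat (K w') n u - sigmaSqPop m (K w'))| ≤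
      |sigmaHat (K w) n u - sigmaHat (K w') n u|
        + |sigmaSqPop m (K w) - sigmaSqPop m (K w')| := by
    have h : (sigmaHat (K w) n u - sigmaSqPop m (K w)) -
        (sigmaHat (K w') n u - sigmaSqPop m (K w')) =
        (sigmaHat (K w) n u - sigmaHat (K w') n u)
          - (sigmaSqPop m (K w) - sigmaSqPop m (K w')) := by ring
    rw [h]
    exact abs_sub _ _
  calc |(sigmaHat (K w) n u - sigmaSqPop m (K w)) -
      (sigmaHat (K w') n u - sigmaSqPop m (K w'))|
      ≤ 16 * (3 * ν) * (3 * c) + 16 * (3 * ν) * (3 * c) := by linarith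
    _ = 288 * ν * Lk * ‖w - w'‖ := by rw [hc_def]; ring
end

section
/- (Deterministic decomposition of the error of the regularized ratio statistic.) Let Ω be any index set, λ > 0, s > 0, ν > 0, and let η̂, η, σ̂², σ² : Ω → ℝ be functions with |η̂(ω)| ≤ 3ν, σ̂²(ω) ≥ 0, and σ²(ω) ≥ s² for all ω ∈ Ω. Then sup_{ω∈Ω} | η̂(ω)/√(σ̂²(ω) + λ) − η(ω)/√(σ²(ω)) | ≤ (3ν/(√λ s²)) · sup_{ω∈Ω} |σ̂²(ω) − σ²(ω)| + 3νλ/(2s³) + (1/s) · sup_{ω∈Ω} |η̂(ω) − η(ω)|. -/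
/-!
Pass through `η̂ / √(σ² + λ)`: the error splits into a regularization term, a bias term and a
noise term. The first two are differences of `t ↦ 1 / √t`, controlled by the identity
`1/√u - 1/√v = (v - u) / ((√u + √v) √u √v)` together with `√(σ² + λ) ≥ s`, `√(σ̂² + λ) ≥ √λ`.
-/

lemma inv_sqrt_sub_inv_sqrt {u v : ℝ} (hu : 0 < u) (hv : 0 < v) :
    (√u)⁻¹ - (√v)⁻¹ = (v - u) / ((√u + √v) * (√u * √v)) := by
  have hsu := Real.sqrt_pos.2 hu
  have hsv := Real.sqrt_pos.2 hv
  field_simp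
  linear_combination Real.sq_sqrt hv.le - Real.sq_sqrt hu.le

lemma abs_inv_sqrt_sub_inv_sqrt_le {u v c : ℝ} (hu : 0 < u) (hv : 0 < v) (hc : 0 < c)
    (h : c ≤ (√u + √v) * (√u * √v)) :
    |(√u)⁻¹ - (√v)⁻¹| ≤ |u - v| / c := by
  rw [inv_sqrt_sub_inv_sqrt hu hv, abs_div, abs_sub_comm,
    abs_of_pos (hc.trans_le h)]
  exact div_le_div_of_nonneg_left (abs_nonneg _) hc h

lemma abs_div_sqrt_add_sub_div_sqrt_le {lam s M a b x y : ℝ} (hlam : 0 < lam) (hs : 0 < s)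
    (hx : |x| ≤ M) (ha : 0 ≤ a) (hb : s ^ 2 ≤ b) :
    |x / √(a + lam) - y / √b| ≤
      M / (√lam * s ^ 2) * |a - b| + M * lam / (2 * s ^ 3) + 1 / s * |x - y| := by
  have hb0 : 0 < b := (pow_pos hs 2).trans_le hb
  have hsb : s ≤ √b := Real.le_sqrt_of_sq_le hb
  have hsbl : s ≤ √(b + lam) := Real.le_sqrt_of_sq_le (by linarith)
  have hsal : √lam ≤ √(a + lam) := Real.sqrt_le_sqrt (by linarith)
  have hM : 0 ≤ M := (abs_nonneg x).trans hx
  have regularization : |(√(a + lam))⁻¹ - (√(b + lam))⁻¹| ≤ |a - b| / (√lam * s ^ 2) := by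
    rw [← add_sub_add_right_eq_sub a b lam]
    refine abs_inv_sqrt_sub_inv_sqrt_le (by linarith) (by linarith) (by positivity) ?_
    calc √lam * s ^ 2 = s * (√lam * s) := by ring
      _ ≤ (√(a + lam) + √(b + lam)) * (√(a + lam) * √(b + lam)) := by
        gcongr
        linarith [Real.sqrt_nonneg (a + lam)]
  have bias : |(√(b + lam))⁻¹ - (√b)⁻¹| ≤ lam / (2 * s ^ 3) := by
    have hc : 2 * s ^ 3 ≤ (√(b + lam) + √b) * (√(b + lam) * √b) := by
      have : s * s ≤ √(b + lam) * √b := mul_le_mul hsbl hsb hs.le (by positivity)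
      nlinarith
    simpa only [add_sub_cancel_left, abs_of_pos hlam] using
      abs_inv_sqrt_sub_inv_sqrt_le (by linarith) hb0 (by positivity) hc
  have noise : |(x - y) / √b| ≤ 1 / s * |x - y| := by
    rw [abs_div, abs_of_pos (hs.trans_le hsb), div_eq_inv_mul, one_div]
    gcongr
  calc |x / √(a + lam) - y / √b|
      = |x * ((√(a + lam))⁻¹ - (√(b + lam))⁻¹) + x * ((√(b + lam))⁻¹ - (√b)⁻¹)
          + (x - y) / √b| := by congr 1; ring
    _ ≤ |x| * |(√(a + lam))⁻¹ - (√(b + lam))⁻¹| + |x| * |(√(b + lam))⁻¹ - (√b)⁻¹|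
          + |(x - y) / √b| := by
        rw [← abs_mul, ← abs_mul]; exact abs_add_three _ _ _
    _ ≤ M * (|a - b| / (√lam * s ^ 2)) + M * (lam / (2 * s ^ 3)) + 1 / s * |x - y| := by
        gcongr
    _ = _ := by ring

lemma biSup_ofReal_le_mul_add_add_mul {W : Type*} {S : Set W} {f g h : W → ℝ} {A B C : ℝ}
    (hA : 0 ≤ A) (hC : 0 ≤ C) (hfgh : ∀ w ∈ S, f w ≤ A * g w + B + C * h w) :
    (⨆ w ∈ S, ENNReal.ofReal (f w)) ≤
      ENNReal.ofReal A * (⨆ w ∈ S, ENNReal.ofReal (g w)) + ENNReal.ofReal B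
        + ENNReal.ofReal C * (⨆ w ∈ S, ENNReal.ofReal (h w)) := by
  refine iSup₂_le fun w hw => ?_
  calc ENNReal.ofReal (f w) ≤ ENNReal.ofReal (A * g w + B + C * h w) :=
        ENNReal.ofReal_le_ofReal (hfgh w hw)
    _ ≤ ENNReal.ofReal A * ENNReal.ofReal (g w) + ENNReal.ofReal B
          + ENNReal.ofReal C * ENNReal.ofReal (h w) := by
        rw [← ENNReal.ofReal_mul hA, ← ENNReal.ofReal_mul hC]
        exact ENNReal.ofReal_add_le.trans (add_le_add_left ENNReal.ofReal_add_le _)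
    _ ≤ _ := by
        gcongr
        · exact le_iSup₂ (f := fun w _ => ENNReal.ofReal (g w)) w hw
        · exact le_iSup₂ (f := fun w _ => ENNReal.ofReal (h w)) w hw

/-- Deterministic decomposition of the error of the regularized ratio statistic:
`sup_{ω∈Ω} |η̂/√(σ̂²+λ) − η/√σ²|
  ≤ (3ν/(√λ s²)) sup_{ω∈Ω} |σ̂² − σ²| + 3νλ/(2s³) + (1/s) sup_{ω∈Ω} |η̂ − η|`,
with the suprema taken in `ℝ≥0∞` so that possibly infinite suprema are handled. -/
theorem ratio_error_decomposition {W : Type*} (S : Set W) (lam s ν : ℝ)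
    (hlam : 0 < lam) (hs : 0 < s) (hν : 0 < ν)
    (etaHat eta sigmaHatSq sigmaSq : W → ℝ)
    (hetaHat : ∀ w ∈ S, |etaHat w| ≤ 3 * ν)
    (hsigmaHat : ∀ w ∈ S, 0 ≤ sigmaHatSq w)
    (hsigma : ∀ w ∈ S, s ^ 2 ≤ sigmaSq w) :
    (⨆ w ∈ S, ENNReal.ofReal
        |etaHat w / Real.sqrt (sigmaHatSq w + lam) - eta w / Real.sqrt (sigmaSq w)|) ≤
      ENNReal.ofReal (3 * ν / (Real.sqrt lam * s ^ 2)) *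
          (⨆ w ∈ S, ENNReal.ofReal |sigmaHatSq w - sigmaSq w|)
        + ENNReal.ofReal (3 * ν * lam / (2 * s ^ 3))
        + ENNReal.ofReal (1 / s) * (⨆ w ∈ S, ENNReal.ofReal |etaHat w - eta w|) :=
  biSup_ofReal_le_mul_add_add_mul (by positivity) (by positivity) fun w hw =>
    abs_div_sqrt_add_sub_div_sqrt_le hlam hs (hetaHat w hw) (hsigmaHat w hw) (hsigma w hw)
end
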